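/- arXiv:1705.01699 — 2 statements merged into one kernel-verified Lean document; each statement's English description precedes it below -/
import Mathlib

section
/- Let f : ℝ² → [0,∞) be a bounded probability density, f_ξ(s) = ξ^{−2} f(s/ξ), let A ⊂ ℝ² be measurable with finite measure |A|, and fix λ, m̄ > 0. Then lim_{ξ→∞} exp( −λ ∫_{ℝ²} ( 1 − exp( −m̄ ∫_A f_ξ(y − z) dy ) ) dz ) = exp( −λ m̄ |A| ). -/
/-!
Write `G_ξ(z) = ∫_A f_ξ(y - z) dy`. By Fubini and translation invariance `∫ G_ξ = |A|`, while
`0 ≤ G_ξ ≤ ξ⁻² (sup f) |A|`, so `G_ξ → 0` uniformly. The elementary bounds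
`x e^{-x} ≤ 1 - e^{-x} ≤ x` then squeeze `∫ (1 - e^{-m G_ξ})` between `e^{-m sup G_ξ} m |A|` and
`m |A|`, and both tend to `m |A|`.
-/

open MeasureTheory Filter Topology

namespace Real

lemma one_sub_exp_neg_le (x : ℝ) : 1 - exp (-x) ≤ x := by
  linarith [add_one_le_exp (-x)]

lemma mul_exp_neg_le_one_sub_exp_neg (x : ℝ) : x * exp (-x) ≤ 1 - exp (-x) := by
  have h : (x + 1) * exp (-x) ≤ exp x * exp (-x) :=
    mul_le_mul_of_nonneg_right (add_one_le_exp x) (exp_pos _).le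
  rw [← exp_add, add_neg_cancel, exp_zero] at h
  linarith

end Real

section OneSubExpNeg

variable {X : Type*} [MeasurableSpace X] {μ : Measure X} {g : X → ℝ}

lemma MeasureTheory.Integrable.one_sub_exp_neg (hg : Integrable g μ) (hg0 : ∀ x, 0 ≤ g x) :
    Integrable (fun x ↦ 1 - Real.exp (-g x)) μ := by
  refine hg.mono' ((by fun_prop : Continuous fun t ↦ 1 - Real.exp (-t)).comp_aestronglyMeasurable
    hg.aestronglyMeasurable) (Eventually.of_forall fun x ↦ ?_)
  have hexp : Real.exp (-g x) ≤ 1 := Real.exp_le_one_iff.2 (neg_nonpos.2 (hg0 x))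
  rw [Real.norm_eq_abs, abs_of_nonneg (by linarith)]
  exact Real.one_sub_exp_neg_le _

lemma integral_one_sub_exp_neg_le (hg : Integrable g μ) (hg0 : ∀ x, 0 ≤ g x) :
    ∫ x, (1 - Real.exp (-g x)) ∂μ ≤ ∫ x, g x ∂μ :=
  integral_mono (hg.one_sub_exp_neg hg0) hg fun x ↦ Real.one_sub_exp_neg_le (g x)

lemma exp_neg_mul_integral_le_integral_one_sub_exp_neg {δ : ℝ} (hg : Integrable g μ)
    (hg0 : ∀ x, 0 ≤ g x) (hgδ : ∀ x, g x ≤ δ) :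
    Real.exp (-δ) * ∫ x, g x ∂μ ≤ ∫ x, (1 - Real.exp (-g x)) ∂μ := by
  rw [← integral_const_mul]
  refine integral_mono (hg.const_mul _) (hg.one_sub_exp_neg hg0) fun x ↦ ?_
  calc Real.exp (-δ) * g x ≤ g x * Real.exp (-g x) := by
        rw [mul_comm]
        exact mul_le_mul_of_nonneg_left (Real.exp_le_exp.2 (neg_le_neg (hgδ x))) (hg0 x)
    _ ≤ 1 - Real.exp (-g x) := Real.mul_exp_neg_le_one_sub_exp_neg _

lemma tendsto_integral_one_sub_exp_neg {ι : Type*} {l : Filter ι} {g : ι → X → ℝ} {δ : ι → ℝ}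
    {a : ℝ} (hg : ∀ᶠ i in l, Integrable (g i) μ) (hg0 : ∀ᶠ i in l, ∀ x, 0 ≤ g i x)
    (hgδ : ∀ᶠ i in l, ∀ x, g i x ≤ δ i) (hga : ∀ᶠ i in l, ∫ x, g i x ∂μ = a)
    (hδ : Tendsto δ l (𝓝 0)) :
    Tendsto (fun i ↦ ∫ x, (1 - Real.exp (-g i x)) ∂μ) l (𝓝 a) := by
  have hlower : Tendsto (fun i ↦ Real.exp (-δ i) * a) l (𝓝 a) := by
    simpa using ((Real.continuous_exp.tendsto _).comp hδ.neg).mul_const a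
  refine tendsto_of_tendsto_of_tendsto_of_le_of_le' hlower tendsto_const_nhds ?_ ?_
  · filter_upwards [hg, hg0, hgδ, hga] with i hgi hgi0 hgiδ hgia
    exact hgia ▸ exp_neg_mul_integral_le_integral_one_sub_exp_neg hgi hgi0 hgiδ
  · filter_upwards [hg, hg0, hga] with i hgi hgi0 hgia
    exact hgia ▸ integral_one_sub_exp_neg_le hgi hgi0

end OneSubExpNeg

section Smoothing

variable {G : Type*} [MeasurableSpace G] [AddGroup G] [MeasurableAdd₂ G] [MeasurableNeg G]
  {μ : Measure G} [SFinite μ] [μ.IsAddLeftInvariant] [μ.IsNegInvariant]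
  {k : G → ℝ} {s : Set G}

lemma integrable_comp_sub_prod_restrict (hk : Measurable k) (hki : Integrable k μ)
    (hs : μ s ≠ ⊤) :
    Integrable (fun p : G × G ↦ k (p.2 - p.1)) (μ.prod (μ.restrict s)) := by
  have : IsFiniteMeasure (μ.restrict s) := isFiniteMeasure_restrict.2 hs
  refine (integrable_prod_iff' (f := fun p : G × G ↦ k (p.2 - p.1))
    (hk.comp (measurable_snd.sub measurable_fst)).aestronglyMeasurable).2
    ⟨Eventually.of_forall fun y ↦ hki.comp_sub_left y, ?_⟩
  have hnorm (y : G) : ∫ z, ‖k (y - z)‖ ∂μ = ∫ w, ‖k w‖ ∂μ :=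
    integral_sub_left_eq_self (fun w ↦ ‖k w‖) μ y
  simpa only [hnorm] using integrable_const (μ := μ.restrict s) (∫ w, ‖k w‖ ∂μ)

lemma integrable_setIntegral_comp_sub (hk : Measurable k) (hki : Integrable k μ)
    (hs : μ s ≠ ⊤) : Integrable (fun z ↦ ∫ y in s, k (y - z) ∂μ) μ :=
  (integrable_comp_sub_prod_restrict hk hki hs).integral_prod_left

lemma integral_setIntegral_comp_sub (hk : Measurable k) (hki : Integrable k μ) (hs : μ s ≠ ⊤) :
    ∫ z, ∫ y in s, k (y - z) ∂μ ∂μ = μ.real s * ∫ w, k w ∂μ := by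
  rw [integral_integral_swap (integrable_comp_sub_prod_restrict hk hki hs)]
  simp only [integral_sub_left_eq_self k μ, setIntegral_const, smul_eq_mul]

theorem tendsto_integral_one_sub_exp_neg_mul_setIntegral_comp_sub {ι : Type*} {l : Filter ι}
    {k : ι → G → ℝ} {ε : ι → ℝ} {m : ℝ} (hm : 0 ≤ m) (hk_meas : ∀ᶠ i in l, Measurable (k i))
    (hk_int : ∀ᶠ i in l, Integrable (k i) μ) (hk_nonneg : ∀ᶠ i in l, ∀ w, 0 ≤ k i w)
    (hk_le : ∀ᶠ i in l, ∀ w, k i w ≤ ε i) (hk_one : ∀ᶠ i in l, ∫ w, k i w ∂μ = 1)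
    (hε : Tendsto ε l (𝓝 0)) (hs : μ s ≠ ⊤) :
    Tendsto (fun i ↦ ∫ z, (1 - Real.exp (-(m * ∫ y in s, k i (y - z) ∂μ))) ∂μ) l
      (𝓝 (m * μ.real s)) := by
  refine tendsto_integral_one_sub_exp_neg (δ := fun i ↦ m * (ε i * μ.real s)) ?_ ?_ ?_ ?_
    (by simpa using (hε.mul_const (μ.real s)).const_mul m)
  · filter_upwards [hk_meas, hk_int] with i hmeas hint
    exact (integrable_setIntegral_comp_sub hmeas hint hs).const_mul m
  · filter_upwards [hk_nonneg] with i hnonneg z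
    exact mul_nonneg hm (integral_nonneg fun y ↦ hnonneg _)
  · filter_upwards [hk_nonneg, hk_le] with i hnonneg hle z
    refine mul_le_mul_of_nonneg_left ((Real.le_norm_self _).trans
      (norm_setIntegral_le_of_norm_le_const hs.lt_top fun y _ ↦ ?_)) hm
    rw [Real.norm_eq_abs, abs_of_nonneg (hnonneg _)]
    exact hle _
  · filter_upwards [hk_meas, hk_int, hk_one] with i hmeas hint hone
    rw [integral_const_mul, integral_setIntegral_comp_sub hmeas hint hs, hone, mul_one]

end Smoothing

lemma integral_inv_pow_finrank_mul_comp_inv_smul {E : Type*} [NormedAddCommGroup E]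
    [NormedSpace ℝ E] [MeasurableSpace E] [BorelSpace E] [FiniteDimensional ℝ E] (μ : Measure E)
    [μ.IsAddHaarMeasure] (f : E → ℝ) {c : ℝ} (hc : 0 < c) :
    ∫ w, c⁻¹ ^ Module.finrank ℝ E * f (c⁻¹ • w) ∂μ = ∫ w, f w ∂μ := by
  rw [integral_const_mul, Measure.integral_comp_smul, smul_eq_mul, abs_of_pos (by positivity),
    mul_inv_cancel_left₀ (by positivity)]

theorem void_probability_limit_general
    (f : EuclideanSpace ℝ (Fin 2) → ℝ)
    (hf : Measurable f) (hf0 : ∀ s, 0 ≤ f s) (hf1 : ∫ s, f s = 1)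
    (hbdd : BddAbove (Set.range f))
    (A : Set (EuclideanSpace ℝ (Fin 2)))
    (hAfin : volume A < ⊤) (lam m : ℝ) (hm : 0 < m) :
    Filter.Tendsto
      (fun ξ : ℝ =>
        Real.exp (-lam * ∫ z : EuclideanSpace ℝ (Fin 2),
          (1 - Real.exp (-m * ∫ y in A, ξ⁻¹ ^ 2 * f (ξ⁻¹ • (y - z))))))
      Filter.atTop
      (nhds (Real.exp (-lam * m * (volume A).toReal))) := by
  have hfi : Integrable f := .of_integral_ne_zero (by simp [hf1])
  obtain ⟨C, hC⟩ := hbdd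
  have hd : Module.finrank ℝ (EuclideanSpace ℝ (Fin 2)) = 2 := finrank_euclideanSpace_fin
  have hvoid := tendsto_integral_one_sub_exp_neg_mul_setIntegral_comp_sub (μ := volume) (s := A)
    (k := fun ξ w ↦ ξ⁻¹ ^ 2 * f (ξ⁻¹ • w)) (ε := fun ξ ↦ ξ⁻¹ ^ 2 * C) (l := atTop) hm.le
    (.of_forall fun ξ ↦ (hf.comp (measurable_const_smul _)).const_mul _)
    ((eventually_ne_atTop 0).mono fun ξ hξ ↦
      ((integrable_comp_smul_iff volume f (inv_ne_zero hξ)).2 hfi).const_mul _)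
    (.of_forall fun ξ w ↦ mul_nonneg (by positivity) (hf0 _))
    (.of_forall fun ξ w ↦ mul_le_mul_of_nonneg_left (hC ⟨_, rfl⟩) (by positivity))
    ((eventually_gt_atTop 0).mono fun ξ hξ ↦ by
      simpa [hd, hf1] using integral_inv_pow_finrank_mul_comp_inv_smul volume f hξ)
    (by simpa using (tendsto_inv_atTop_zero.pow 2).mul_const C) hAfin.ne
  simpa [neg_mul, mul_assoc, Function.comp_def, measureReal_def] using
    (Real.continuous_exp.tendsto _).comp (hvoid.const_mul (-lam))

/-- Void probability convergence: the void probability of a Neyman–Scott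
cluster process with offspring density f_ξ(s) = ξ⁻² f(s/ξ) converges, as
ξ → ∞, to the void probability exp(−λ m̄ |A|) of a homogeneous PPP of
intensity λ m̄. -/
theorem void_probability_limit
    (f : EuclideanSpace ℝ (Fin 2) → ℝ)
    (hf : Measurable f) (hf0 : ∀ s, 0 ≤ f s) (hf1 : ∫ s, f s = 1)
    (hbdd : BddAbove (Set.range f))
    (A : Set (EuclideanSpace ℝ (Fin 2))) (hA : MeasurableSet A)
    (hAfin : volume A < ⊤) (lam m : ℝ) (hlam : 0 < lam) (hm : 0 < m) :
    Filter.Tendsto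
      (fun ξ : ℝ =>
        Real.exp (-lam * ∫ z : EuclideanSpace ℝ (Fin 2),
          (1 - Real.exp (-m * ∫ y in A, ξ⁻¹ ^ 2 * f (ξ⁻¹ • (y - z))))))
      Filter.atTop
      (nhds (Real.exp (-lam * m * (volume A).toReal))) :=
  void_probability_limit_general f hf hf0 hf1 hbdd A hAfin lam m hm
end

section
/- Let N be Poisson with mean m̄ > 0, and conditional on N = n let Y_1, …, Y_n be i.i.d. points in ℝ² with density f. Condition on the size-biased cluster (i.e., replace the law of N by the size-biased pmf n p_n/m̄ on n ≥ 1, with one distinguished point removed uniformly). Then for measurable g : ℝ² → [0,1] and v : ℝ² → [0,1], the sum-product functional E[ Σ_{i=1}^{Ñ} g(Y_i) Π_{j≤Ñ, j≠i} v(Y_j) ] computed under the size-biased law Ñ ∼ n p_n/m̄ equals ∫_{ℝ²} g(x) f(x) dx · exp( −m̄ ∫_{ℝ²} (1 − v(y)) f(y) dy ) · ( m̄ ∫_{ℝ²} v(y) f(y) dy + 1 ). -/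
/-!
Under the product law `μⁿ`, with `μ = f · volume` a probability measure, the `i`-th summand
`g(yᵢ) ∏_{j ≠ i} v(yⱼ)` is a product of functions of independent coordinates, so the sum
integrates to `n G Tⁿ⁻¹` with `G = ∫ g f` and `T = ∫ v f`. Averaging against the size-biased
Poisson weights `n pₙ / m` leaves `G ∑ₙ (n/(n-1)!) e⁻ᵐ (mT)ⁿ⁻¹ = G e^{-m(1-T)} (mT + 1)`,
and `∫ (1 - v) f = 1 - T`.
-/

open MeasureTheory Finset
open scoped Nat

theorem hasSum_succ_mul_pow_div_factorial (x : ℝ) :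
    HasSum (fun n : ℕ => ((n : ℝ) + 1) * x ^ n / n !) (Real.exp x * (x + 1)) := by
  have hexp : HasSum (fun n : ℕ => x ^ n / n !) (Real.exp x) := by
    rw [Real.exp_eq_exp_ℝ]
    exact NormedSpace.expSeries_div_hasSum_exp x
  have hmul : HasSum (fun n : ℕ => (n : ℝ) * x ^ n / n !) (x * Real.exp x) := by
    have hterm (n : ℕ) : ((n + 1 : ℕ) : ℝ) * x ^ (n + 1) / (n + 1)! = x * (x ^ n / n !) := by
      rw [Nat.factorial_succ]
      push_cast
      field_simp
      ring
    rw [← hasSum_nat_add_iff' 1]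
    simpa only [hterm, sum_range_one, Nat.cast_zero, zero_mul, zero_div, sub_zero]
      using hexp.mul_left x
  convert hmul.add hexp using 1
  · ext n
    ring
  · ring

theorem hasSum_sizeBiased_poisson_mul_nat_mul_pow_pred {m : ℝ} (hm : m ≠ 0) (t : ℝ) :
    HasSum (fun n : ℕ => (n * (Real.exp (-m) * m ^ n / n !) / m) * (n * t ^ (n - 1)))
      (Real.exp (-m * (1 - t)) * (m * t + 1)) := by
  have hterm (n : ℕ) : ((n + 1 : ℕ) * (Real.exp (-m) * m ^ (n + 1) / (n + 1)!) / m)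
      * ((n + 1 : ℕ) * t ^ (n + 1 - 1)) = Real.exp (-m) * ((n + 1) * (m * t) ^ n / n !) := by
    rw [Nat.factorial_succ, Nat.add_sub_cancel]
    push_cast
    field_simp
    ring
  have hsum : Real.exp (-m * (1 - t)) * (m * t + 1)
      = Real.exp (-m) * (Real.exp (m * t) * (m * t + 1)) := by
    rw [show -m * (1 - t) = -m + m * t by ring, Real.exp_add, mul_assoc]
  rw [← hasSum_nat_add_iff' 1]
  simpa only [hterm, hsum, sum_range_one, Nat.cast_zero, zero_mul, zero_div, sub_zero]
    using (hasSum_succ_mul_pow_div_factorial (m * t)).mul_left (Real.exp (-m))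

section WithDensity

variable {α : Type*} [MeasurableSpace α] {μ : Measure α} {f : α → ℝ}

theorem integral_withDensity_ofReal (hf : AEMeasurable f μ) (hf0 : 0 ≤ᵐ[μ] f) (w : α → ℝ) :
    ∫ x, w x ∂μ.withDensity (fun x => ENNReal.ofReal (f x)) = ∫ x, w x * f x ∂μ := by
  rw [integral_withDensity_eq_integral_toReal_smul₀ hf.ennreal_ofReal
    (ae_of_all _ fun _ => ENNReal.ofReal_lt_top)]
  refine integral_congr_ae ?_
  filter_upwards [hf0] with x hx
  rw [ENNReal.toReal_ofReal hx, smul_eq_mul, mul_comm]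

theorem isProbabilityMeasure_withDensity_ofReal (hf0 : 0 ≤ᵐ[μ] f) (hf1 : ∫ x, f x ∂μ = 1) :
    IsProbabilityMeasure (μ.withDensity fun x => ENNReal.ofReal (f x)) := by
  have hfi : Integrable f μ := .of_integral_ne_zero (by simp [hf1])
  constructor
  rw [withDensity_apply _ MeasurableSet.univ, Measure.restrict_univ,
    ← ofReal_integral_eq_lintegral_ofReal hfi hf0, hf1, ENNReal.ofReal_one]

end WithDensity

theorem mul_prod_erase_eq_prod_update {ι α M : Type*} [Fintype ι] [DecidableEq ι] [CommMonoid M]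
    (g v : α → M) (y : ι → α) (i : ι) :
    g (y i) * ∏ j ∈ univ.erase i, v (y j) = ∏ j, Function.update (fun _ => v) i g j (y j) := by
  rw [← mul_prod_erase univ _ (mem_univ i), Function.update_self]
  congr 1
  refine prod_congr rfl fun j hj => ?_
  rw [Function.update_of_ne (ne_of_mem_erase hj)]

section Pi

variable {ι α : Type*} [Fintype ι] [DecidableEq ι] [MeasurableSpace α] {μ : Measure α}
  [SigmaFinite μ] {g v : α → ℝ}

theorem integral_pi_mul_prod_erase (i : ι) :
    ∫ y, g (y i) * ∏ j ∈ univ.erase i, v (y j) ∂(Measure.pi fun _ => μ)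
      = (∫ x, g x ∂μ) * (∫ x, v x ∂μ) ^ (Fintype.card ι - 1) := by
  simp_rw [mul_prod_erase_eq_prod_update, integral_fintype_prod_eq_prod]
  rw [← mul_prod_erase univ _ (mem_univ i), Function.update_self,
    prod_congr rfl fun j hj => by rw [Function.update_of_ne (ne_of_mem_erase hj)],
    prod_const, card_erase_of_mem (mem_univ i), card_univ]

theorem integrable_pi_mul_prod_erase (hg : Integrable g μ) (hv : Integrable v μ) (i : ι) :
    Integrable (fun y => g (y i) * ∏ j ∈ univ.erase i, v (y j)) (Measure.pi fun _ => μ) := by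
  simp_rw [mul_prod_erase_eq_prod_update]
  refine Integrable.fintype_prod_dep fun j => ?_
  rcases eq_or_ne j i with rfl | hj
  · simpa using hg
  · simpa [hj] using hv

theorem integral_pi_sum_mul_prod_erase (hg : Integrable g μ) (hv : Integrable v μ) :
    ∫ y : ι → α, ∑ i, g (y i) * ∏ j ∈ univ.erase i, v (y j) ∂(Measure.pi fun _ => μ)
      = (Fintype.card ι : ℝ) * (∫ x, g x ∂μ) * (∫ x, v x ∂μ) ^ (Fintype.card ι - 1) := by
  rw [integral_finsetSum _ fun i _ => integrable_pi_mul_prod_erase hg hv i]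
  simp_rw [integral_pi_mul_prod_erase, sum_const, card_univ, nsmul_eq_mul, mul_assoc]

end Pi

theorem MeasureTheory.Integrable.of_mem_Icc_zero_one {α : Type*} [MeasurableSpace α]
    {μ : Measure α} [IsFiniteMeasure μ] {w : α → ℝ} (hw : Measurable w)
    (hw01 : ∀ x, w x ∈ Set.Icc (0 : ℝ) 1) :
    Integrable w μ :=
  .of_bound hw.aestronglyMeasurable 1 <| ae_of_all _ fun x =>
    abs_le.2 ⟨by linarith [(hw01 x).1], (hw01 x).2⟩

theorem sizeBiased_cluster_sum_product_general
    (f g v : EuclideanSpace ℝ (Fin 2) → ℝ)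
    (hf0 : ∀ y, 0 ≤ f y) (hf1 : ∫ y, f y = 1)
    (hg : Measurable g) (hv : Measurable v)
    (hg01 : ∀ y, g y ∈ Set.Icc (0 : ℝ) 1)
    (hv01 : ∀ y, v y ∈ Set.Icc (0 : ℝ) 1)
    (m : ℝ) (hm : 0 < m) :
    (∑' n : ℕ, ((n : ℝ) * (Real.exp (-m) * m ^ n / n.factorial) / m) *
        ∫ y : Fin n → EuclideanSpace ℝ (Fin 2),
          (∑ i : Fin n, g (y i) * ∏ j ∈ Finset.univ.erase i, v (y j))
          ∂(Measure.pi fun _ =>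
              volume.withDensity fun s => ENNReal.ofReal (f s)))
      = (∫ y, g y * f y) * Real.exp (-m * ∫ y, (1 - v y) * f y) *
          (m * (∫ y, v y * f y) + 1) := by
  set μ := volume.withDensity fun s => ENNReal.ofReal (f s)
  have hf : AEMeasurable f := (Integrable.of_integral_ne_zero (by simp [hf1])).aemeasurable
  have hμ (w : EuclideanSpace ℝ (Fin 2) → ℝ) : ∫ x, w x ∂μ = ∫ x, w x * f x :=
    integral_withDensity_ofReal hf (ae_of_all _ hf0) w
  have : IsProbabilityMeasure μ := isProbabilityMeasure_withDensity_ofReal (ae_of_all _ hf0) hf1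
  have hgμ : Integrable g μ := .of_mem_Icc_zero_one hg hg01
  have hvμ : Integrable v μ := .of_mem_Icc_zero_one hv hv01
  have h1v : ∫ y, (1 - v y) * f y = 1 - ∫ y, v y ∂μ := by
    rw [← hμ, integral_sub (integrable_const 1) hvμ, integral_const, probReal_univ, one_smul]
  simp_rw [integral_pi_sum_mul_prod_erase hgμ hvμ, Fintype.card_fin, h1v, ← hμ]
  calc _ = ∑' n : ℕ, (∫ x, g x ∂μ) * ((n * (Real.exp (-m) * m ^ n / n !) / m)
        * (n * (∫ x, v x ∂μ) ^ (n - 1))) := by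
        congr with n
        ring
    _ = _ := by
      rw [((hasSum_sizeBiased_poisson_mul_nat_mul_pow_pred hm.ne' _).mul_left _).tsum_eq, mul_assoc]

/-- Sum-product functional of the offspring process of a Neyman–Scott cluster
under the size-biased law: with p_n the Poisson(m̄) pmf and the cluster size
distributed as n p_n/m̄ (the cluster conditioned to contain the removed typical
point), for i.i.d. points with density f,
E[Σᵢ g(Yᵢ) Π_{j≠i} v(Yⱼ)] = (∫ g f) exp(−m̄ ∫(1−v) f)(m̄ ∫ v f + 1). -/
theorem sizeBiased_cluster_sum_product
    (f g v : EuclideanSpace ℝ (Fin 2) → ℝ)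
    (hf : Measurable f) (hf0 : ∀ y, 0 ≤ f y) (hf1 : ∫ y, f y = 1)
    (hg : Measurable g) (hv : Measurable v)
    (hg01 : ∀ y, g y ∈ Set.Icc (0 : ℝ) 1)
    (hv01 : ∀ y, v y ∈ Set.Icc (0 : ℝ) 1)
    (m : ℝ) (hm : 0 < m) :
    (∑' n : ℕ, ((n : ℝ) * (Real.exp (-m) * m ^ n / n.factorial) / m) *
        ∫ y : Fin n → EuclideanSpace ℝ (Fin 2),
          (∑ i : Fin n, g (y i) * ∏ j ∈ Finset.univ.erase i, v (y j))
          ∂(Measure.pi fun _ =>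
              volume.withDensity fun s => ENNReal.ofReal (f s)))
      = (∫ y, g y * f y) * Real.exp (-m * ∫ y, (1 - v y) * f y) *
          (m * (∫ y, v y * f y) + 1) :=
  sizeBiased_cluster_sum_product_general f g v hf0 hf1 hg hv hg01 hv01 m hm
end
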